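/- Let p > 2 and t ∈ [0, 4]. Then sup{‖φ+ψ‖_p^p : φ, ψ ∈ L^p([0,1]), ‖φ‖_p = ‖ψ‖_p = 1, ‖φ-ψ‖_p^p = t} = 2^p - t. In particular, if ‖φ‖_p = ‖ψ‖_p = 1 then ‖φ+ψ‖_p^p + ‖φ-ψ‖_p^p ≤ 2^p. -/

import Mathlib

/-!
Pointwise, `‖a + b‖ ^ p + ‖a - b‖ ^ p ≤ (‖a + b‖² + ‖a - b‖²) ^ (p / 2)` because `p ≥ 2`, the
parallelogram law turns the right side into `(2 (‖a‖² + ‖b‖²)) ^ (p / 2)`, and convexity of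
`x ↦ x ^ (p / 2)` bounds this by `2 ^ (p - 1) (‖a‖ ^ p + ‖b‖ ^ p)`. Integrating gives Clarkson's
inequality, hence `‖φ + ψ‖ ^ p ≤ 2 ^ p - ‖φ - ψ‖ ^ p` for unit vectors. Equality holds for
`φ = 1` and `ψ = 1` on a set `s` and `-1` off it, where `‖φ + ψ‖ ^ p = 2 ^ p |s|` and
`‖φ - ψ‖ ^ p = 2 ^ p |sᶜ|`; on `[0, 1]` the measure of `s` can be chosen freely.
-/

open MeasureTheory

theorem Real.rpow_add_le_mul_rpow_add_rpow {a b p : ℝ} (ha : 0 ≤ a) (hb : 0 ≤ b) (hp : 1 ≤ p) :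
    (a + b) ^ p ≤ 2 ^ (p - 1) * (a ^ p + b ^ p) := by
  lift a to NNReal using ha
  lift b to NNReal using hb
  exact_mod_cast NNReal.rpow_add_le_mul_rpow_add_rpow a b hp

theorem norm_add_rpow_add_norm_sub_rpow_le {E : Type*} [NormedAddCommGroup E]
    [InnerProductSpace ℝ E] {p : ℝ} (hp : 2 ≤ p) (a b : E) :
    ‖a + b‖ ^ p + ‖a - b‖ ^ p ≤ 2 ^ (p - 1) * (‖a‖ ^ p + ‖b‖ ^ p) := by
  have hq : 1 ≤ p / 2 := by linarith
  have hsq (x : E) : ‖x‖ ^ p = (‖x‖ ^ 2) ^ (p / 2) := by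
    rw [← Real.rpow_natCast, ← Real.rpow_mul (norm_nonneg x)]
    ring_nf
  rw [hsq (a + b), hsq (a - b), hsq a, hsq b]
  calc _ ≤ (‖a + b‖ ^ 2 + ‖a - b‖ ^ 2) ^ (p / 2) :=
        Real.add_rpow_le_rpow_add (by positivity) (by positivity) hq
    _ = 2 ^ (p / 2) * (‖a‖ ^ 2 + ‖b‖ ^ 2) ^ (p / 2) := by
        rw [parallelogram_law_with_norm ℝ, Real.mul_rpow zero_le_two (by positivity)]
    _ ≤ 2 ^ (p / 2) * (2 ^ (p / 2 - 1) * ((‖a‖ ^ 2) ^ (p / 2) + (‖b‖ ^ 2) ^ (p / 2))) := by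
        gcongr
        exact Real.rpow_add_le_mul_rpow_add_rpow (by positivity) (by positivity) hq
    _ = _ := by
        rw [← mul_assoc, ← Real.rpow_add zero_lt_two]
        ring_nf

section Lp

variable {α E : Type*} [MeasurableSpace α] {μ : Measure α} [NormedAddCommGroup E]

theorem Lp.norm_rpow_eq_integral {p : ℝ} (hp : 0 < p) (f : Lp E (ENNReal.ofReal p) μ) :
    ‖f‖ ^ p = ∫ a, ‖f a‖ ^ p ∂μ := by
  rw [Lp.norm_def, toReal_eLpNorm (Lp.aestronglyMeasurable f),
    lpNorm_eq_integral_norm_rpow_toReal (by simpa) ENNReal.ofReal_ne_top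
      (Lp.aestronglyMeasurable f), ENNReal.toReal_ofReal hp.le,
    ← Real.rpow_mul (integral_nonneg fun _ => by positivity), inv_mul_cancel₀ hp.ne',
    Real.rpow_one]

theorem Lp.integrable_norm_rpow {p : ℝ} (hp : 0 < p) (f : Lp E (ENNReal.ofReal p) μ) :
    Integrable (fun a => ‖f a‖ ^ p) μ := by
  simpa [hp.le] using (Lp.memLp f).integrable_norm_rpow (by simpa) ENNReal.ofReal_ne_top

theorem Lp.norm_add_rpow_add_norm_sub_rpow_le [InnerProductSpace ℝ E] {p : ℝ} (hp : 2 ≤ p)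
    (φ ψ : Lp E (ENNReal.ofReal p) μ) :
    ‖φ + ψ‖ ^ p + ‖φ - ψ‖ ^ p ≤ 2 ^ (p - 1) * (‖φ‖ ^ p + ‖ψ‖ ^ p) := by
  have hp0 : 0 < p := by linarith
  simp only [Lp.norm_rpow_eq_integral hp0]
  rw [← integral_add (Lp.integrable_norm_rpow hp0 _) (Lp.integrable_norm_rpow hp0 _),
    ← integral_add (Lp.integrable_norm_rpow hp0 _) (Lp.integrable_norm_rpow hp0 _),
    ← integral_const_mul]
  refine integral_mono_ae ((Lp.integrable_norm_rpow hp0 _).add (Lp.integrable_norm_rpow hp0 _))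
    (((Lp.integrable_norm_rpow hp0 _).add (Lp.integrable_norm_rpow hp0 _)).const_mul _) ?_
  filter_upwards [Lp.coeFn_add φ ψ, Lp.coeFn_sub φ ψ] with a hadd hsub
  rw [hadd, hsub]
  exact _root_.norm_add_rpow_add_norm_sub_rpow_le hp (φ a) (ψ a)

theorem Lp.norm_add_rpow_add_norm_sub_rpow_le_two_rpow [InnerProductSpace ℝ E] {p : ℝ}
    (hp : 2 ≤ p) {φ ψ : Lp E (ENNReal.ofReal p) μ} (hφ : ‖φ‖ = 1) (hψ : ‖ψ‖ = 1) :
    ‖φ + ψ‖ ^ p + ‖φ - ψ‖ ^ p ≤ 2 ^ p := by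
  have h := Lp.norm_add_rpow_add_norm_sub_rpow_le hp φ ψ
  rwa [hφ, hψ, Real.one_rpow, one_add_one_eq_two, Real.rpow_sub_one two_ne_zero,
    div_mul_cancel₀ _ two_ne_zero] at h

theorem Lp.norm_eq_one_of_ae_norm_eq_one [IsProbabilityMeasure μ] {p : ENNReal} (hp : p ≠ 0)
    (f : Lp E p μ) (hf : ∀ᵐ a ∂μ, ‖f a‖ = 1) : ‖f‖ = 1 := by
  rw [Lp.norm_def, eLpNorm_congr_norm_ae (g := fun _ => (1 : ℝ)) (by simpa using hf),
    eLpNorm_const _ hp (IsProbabilityMeasure.ne_zero μ)]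
  simp

theorem norm_indicatorConstLp_rpow {p : ℝ} (hp : 0 < p) {s : Set α} (hs : MeasurableSet s)
    (hμs : μ s ≠ ⊤) (c : E) :
    ‖indicatorConstLp (ENNReal.ofReal p) hs hμs c‖ ^ p = ‖c‖ ^ p * μ.real s := by
  rw [norm_indicatorConstLp (by simpa) ENNReal.ofReal_ne_top, ENNReal.toReal_ofReal hp.le,
    Real.mul_rpow (norm_nonneg c) (by positivity), ← Real.rpow_mul measureReal_nonneg,
    one_div_mul_cancel hp.ne', Real.rpow_one]

theorem Lp.exists_unit_pair_of_measurableSet [IsProbabilityMeasure μ] {p : ℝ}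
    (hp : 0 < p) {s : Set α} (hs : MeasurableSet s) :
    ∃ φ ψ : Lp ℝ (ENNReal.ofReal p) μ, ‖φ‖ = 1 ∧ ‖ψ‖ = 1 ∧
      ‖φ - ψ‖ ^ p = 2 ^ p * μ.real sᶜ ∧ ‖φ + ψ‖ ^ p = 2 ^ p * μ.real s := by
  set u := indicatorConstLp (ENNReal.ofReal p) hs (measure_ne_top μ s) (1 : ℝ)
  set v := indicatorConstLp (ENNReal.ofReal p) hs.compl (measure_ne_top μ sᶜ) (1 : ℝ)
  have hp' : ENNReal.ofReal p ≠ 0 := by simpa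
  have hdouble (t : Set α) (ht : MeasurableSet t) :
      ‖indicatorConstLp (ENNReal.ofReal p) ht (measure_ne_top μ t) (1 + 1 : ℝ)‖ ^ p =
        2 ^ p * μ.real t := by
    rw [norm_indicatorConstLp_rpow hp]
    norm_num
  have hsign : ∀ᵐ a ∂μ, ‖(u + v) a‖ = 1 ∧ ‖(u - v) a‖ = 1 := by
    filter_upwards [Lp.coeFn_add u v, Lp.coeFn_sub u v, (indicatorConstLp_coeFn : u =ᵐ[μ] _),
      (indicatorConstLp_coeFn : v =ᵐ[μ] _)] with a hadd hsub hu hv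
    rw [hadd, hsub, Pi.add_apply, Pi.sub_apply, hu, hv]
    by_cases ha : a ∈ s <;> simp [ha]
  refine ⟨u + v, u - v, Lp.norm_eq_one_of_ae_norm_eq_one hp' _ (hsign.mono fun _ h => h.1),
    Lp.norm_eq_one_of_ae_norm_eq_one hp' _ (hsign.mono fun _ h => h.2), ?_, ?_⟩
  · rw [show u + v - (u - v) = v + v by abel, indicatorConstLp_add, hdouble]
  · rw [show u + v + (u - v) = u + u by abel, indicatorConstLp_add, hdouble]

end Lp

open unitInterval in
theorem exists_unit_pair_unitInterval {p t : ℝ} (hp : 0 < p) (ht0 : 0 ≤ t)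
    (ht : t ≤ 2 ^ p) :
    ∃ φ ψ : Lp ℝ (ENNReal.ofReal p) (volume : Measure I), ‖φ‖ = 1 ∧ ‖ψ‖ = 1 ∧
      ‖φ - ψ‖ ^ p = t ∧ ‖φ + ψ‖ ^ p = 2 ^ p - t := by
  have h2p : 0 < (2 : ℝ) ^ p := by positivity
  set x : I := ⟨1 - t / 2 ^ p, by
    constructor
    · linarith [(div_le_one h2p).2 ht]
    · linarith [div_nonneg ht0 h2p.le]⟩
  have hx : volume.real (Set.Iic x) = 1 - t / 2 ^ p := by
    rw [measureReal_def, volume_Iic, ENNReal.toReal_ofReal x.2.1]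
  obtain ⟨φ, ψ, hφ, hψ, hsub, hadd⟩ :=
    Lp.exists_unit_pair_of_measurableSet (μ := volume) hp (measurableSet_Iic (a := x))
  refine ⟨φ, ψ, hφ, hψ, ?_, ?_⟩
  · rw [hsub, probReal_compl_eq_one_sub measurableSet_Iic, hx]
    field_simp
    ring
  · rw [hadd, hx]
    field_simp

theorem bellman_value_on_diagonal (p : ℝ) (hp : 2 < p) (t : ℝ) (ht0 : 0 ≤ t) (ht4 : t ≤ 4) :
    sSup {y : ℝ | ∃ φ ψ : Lp ℝ (ENNReal.ofReal p) (volume : Measure (Set.Icc (0 : ℝ) 1)),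
        ‖φ‖ = 1 ∧ ‖ψ‖ = 1 ∧ ‖φ - ψ‖ ^ p = t ∧ y = ‖φ + ψ‖ ^ p} = 2 ^ p - t ∧
    ∀ φ ψ : Lp ℝ (ENNReal.ofReal p) (volume : Measure (Set.Icc (0 : ℝ) 1)),
      ‖φ‖ = 1 → ‖ψ‖ = 1 → ‖φ + ψ‖ ^ p + ‖φ - ψ‖ ^ p ≤ 2 ^ p := by
  have h4 : (4 : ℝ) ≤ 2 ^ p := by
    calc (4 : ℝ) = 2 ^ (2 : ℝ) := by norm_num
      _ ≤ 2 ^ p := Real.rpow_le_rpow_of_exponent_le one_le_two hp.le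
  refine ⟨IsGreatest.csSup_eq ⟨?_, ?_⟩,
    fun φ ψ => Lp.norm_add_rpow_add_norm_sub_rpow_le_two_rpow hp.le⟩
  · obtain ⟨φ, ψ, hφ, hψ, hsub, hadd⟩ :=
      exists_unit_pair_unitInterval (by linarith) ht0 (ht4.trans h4)
    exact ⟨φ, ψ, hφ, hψ, hsub, hadd.symm⟩
  · rintro y ⟨φ, ψ, hφ, hψ, rfl, rfl⟩
    linarith [Lp.norm_add_rpow_add_norm_sub_rpow_le_two_rpow hp.le hφ hψ]
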